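/- Let p ≠ 3 be prime and s a complex number with Re(s) > −2, and let T be defined by T(r) = r⁻⁷ Σ_{c=1,(c,r)=1}^{r} |S(r,c)|⁶. Then Σ_{k=0}^{∞} T(p^k)/p^{ks} = (1 − p^{−(3s+6)})⁻¹ · (1 + p^{−(s+7)} Σ_{c=1}^{p−1} |S(p,c)|⁶ + (p−1)p^{−(2s+7)} − p^{−(3s+7)}), where the series converges absolutely. -/

import Mathlib

/-!
Write `m < p ^ (j + 2)` as `m = p ^ (j + 1) * y + x` with `y < p`. Modulo `p ^ (j + 2)`,
`m ^ 3 ≡ x ^ 3 + 3 * x ^ 2 * y * p ^ (j + 1)`, so the sum over `y` in `S (p ^ (j + 2)) a` is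
a complete sum of `e (3 * a * x ^ 2 * y / p)`, which vanishes unless `p ∣ x` (as `p ∤ 3 * a`).
This gives `S (p ^ 2) a = p` and `S (p ^ (i + 3)) a = p ^ 2 * S (p ^ i) a`, hence `T (p ^ k)`
in closed form on each residue class of `k` modulo `3`. Along each class the Dirichlet series
is geometric with ratio `p ^ (-(3 * s + 6))`, of modulus `< 1` as `-2 < re s`.
-/

open Finset

noncomputable def e (x : ℝ) : ℂ := Complex.exp (2 * Real.pi * Complex.I * x)

noncomputable def S (q : ℕ) (b : ℤ) : ℂ :=
  ∑ m ∈ Finset.Icc 1 q, e ((b : ℝ) * (m : ℝ) ^ 3 / q)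

noncomputable def T (r : ℕ) : ℝ :=
  (r : ℝ)⁻¹ ^ 7 * ∑ c ∈ (Finset.Icc 1 r).filter (fun c => Nat.gcd c r = 1),
    ‖S r c‖ ^ 6

lemma Finset.sum_range_mul {M : Type*} [AddCommMonoid M] (f : ℕ → M) (N K : ℕ) :
    ∑ m ∈ range (N * K), f m = ∑ y ∈ range K, ∑ x ∈ range N, f (N * y + x) := by
  induction K with
  | zero => simp
  | succ K ih => rw [Nat.mul_succ, sum_range_add, sum_range_succ, ih]

lemma Finset.sum_range_mul_ite_dvd {M : Type*} [AddCommMonoid M] (f : ℕ → M) {N : ℕ}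
    (hN : 0 < N) (K : ℕ) :
    ∑ x ∈ range (N * K), (if N ∣ x then f x else 0) = ∑ z ∈ range K, f (N * z) := by
  rw [sum_range_mul]
  refine sum_congr rfl fun z _ => ?_
  rw [sum_eq_single_of_mem 0 (mem_range.mpr hN), add_zero, if_pos (dvd_mul_right N z)]
  intro w hw hw0
  exact if_neg fun h => hw0 <|
    Nat.eq_zero_of_dvd_of_lt ((Nat.dvd_add_right (dvd_mul_right N z)).mp h) (mem_range.mp hw)

lemma Function.Periodic.sum_range_mul {M : Type*} [AddCommMonoid M] {f : ℕ → M} {N : ℕ}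
    (hf : Function.Periodic f N) (K : ℕ) :
    ∑ m ∈ range (N * K), f m = K • ∑ x ∈ range N, f x := by
  calc ∑ m ∈ range (N * K), f m = ∑ y ∈ range K, ∑ x ∈ range N, f x := by
        rw [Finset.sum_range_mul]
        refine sum_congr rfl fun y _ => sum_congr rfl fun x _ => ?_
        rw [add_comm, mul_comm]
        simpa using hf.nat_mul y x
    _ = K • ∑ x ∈ range N, f x := by rw [sum_const, card_range]

lemma hasSum_of_apply_mul_add_eq_pow_mul {K : Type*} [NormedDivisionRing K] [CompleteSpace K]
    {N : ℕ} [NeZero N] {f : ℕ → K} {q : K} (hq : ‖q‖ < 1) (b : Fin N → K)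
    (hf : ∀ (u : ℕ) (r : Fin N), f (N * u + r) = q ^ u * b r) :
    HasSum f ((1 - q)⁻¹ * ∑ r, b r) := by
  have hprod : HasSum (fun x : ℕ × Fin N => q ^ x.1 * b x.2) ((1 - q)⁻¹ * ∑ r, b r) :=
    (hasSum_geometric_of_norm_lt_one hq).mul (hasSum_fintype b)
      (summable_mul_of_summable_norm (summable_norm_geometric_of_norm_lt_one hq) .of_finite)
  rw [← (Nat.divModEquiv N).symm.hasSum_iff]
  convert hprod using 2 with x
  simp [← hf, mul_comm]

lemma e_add (x y : ℝ) : e (x + y) = e x * e y := by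
  simp only [e, ← Complex.exp_add]
  push_cast
  ring_nf

lemma e_intCast (n : ℤ) : e n = 1 :=
  Complex.exp_eq_one_iff.mpr ⟨n, by push_cast; ring⟩

lemma e_zero : e 0 = 1 := by
  simpa using e_intCast 0

lemma e_add_intCast (x : ℝ) (n : ℤ) : e (x + n) = e x := by
  rw [e_add, e_intCast, mul_one]

lemma e_pow (x : ℝ) (m : ℕ) : e x ^ m = e (m * x) := by
  simp only [e, ← Complex.exp_nat_mul]
  push_cast
  ring_nf

lemma e_eq_one_iff {x : ℝ} : e x = 1 ↔ ∃ n : ℤ, x = n := by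
  rw [e, Complex.exp_eq_one_iff]
  refine exists_congr fun n => ?_
  rw [mul_comm _ (x : ℂ), mul_left_inj' Complex.two_pi_I_ne_zero]
  exact_mod_cast Iff.rfl

lemma sum_range_e_mul_div {n : ℕ} (hn : 0 < n) (b : ℤ) :
    ∑ y ∈ range n, e (b * y / n) = if (n : ℤ) ∣ b then (n : ℂ) else 0 := by
  have hn' : (n : ℝ) ≠ 0 := by positivity
  have hterm (y : ℕ) : e (b * y / n) = e (b / n) ^ y := by
    rw [e_pow]
    ring_nf
  simp only [hterm]
  split_ifs with hdvd
  · obtain ⟨m, rfl⟩ := hdvd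
    have : e ((n * m : ℤ) / n) = 1 := e_eq_one_iff.mpr ⟨m, by push_cast; field_simp⟩
    simp only [this, one_pow, sum_const, card_range, nsmul_one]
  · have hne : e (b / n) ≠ 1 := by
      intro h
      obtain ⟨m, hm⟩ := e_eq_one_iff.mp h
      refine hdvd ⟨m, ?_⟩
      rw [div_eq_iff hn', mul_comm] at hm
      exact_mod_cast hm
    rw [geom_sum_eq hne, e_pow, mul_div_cancel₀ _ hn', e_intCast, sub_self, zero_div]

lemma periodic_e_mul_cube_div (b : ℤ) (q : ℕ) :
    Function.Periodic (fun m : ℕ => e (b * m ^ 3 / q)) q := by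
  intro m
  rcases Nat.eq_zero_or_pos q with rfl | hq
  · simp
  have hq' : (q : ℝ) ≠ 0 := by positivity
  have h : (b : ℝ) * ((m + q : ℕ) : ℝ) ^ 3 / q
      = b * m ^ 3 / q + ((b * (3 * m ^ 2 + 3 * m * q + q ^ 2) : ℤ) : ℝ) := by
    push_cast
    field_simp
    ring
  simp only [h, e_add_intCast]

lemma periodic_S (q : ℕ) : Function.Periodic (S q) q := by
  intro b
  refine sum_congr rfl fun m _ => ?_
  rcases Nat.eq_zero_or_pos q with rfl | hq
  · simp
  have hq' : (q : ℝ) ≠ 0 := by positivity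
  have h : ((b + q : ℤ) : ℝ) * (m : ℝ) ^ 3 / q = b * m ^ 3 / q + ((m ^ 3 : ℕ) : ℤ) := by
    push_cast
    field_simp
  rw [h, e_add_intCast]

lemma S_eq_sum_range (q : ℕ) (b : ℤ) :
    S q b = ∑ m ∈ range q, e (b * m ^ 3 / q) := by
  set φ : ℕ → ℂ := fun m => e (b * m ^ 3 / q)
  have hφ : φ q = φ 0 := by simpa [φ] using periodic_e_mul_cube_div b q 0
  have hshift := (sum_range_succ' φ q).symm.trans (sum_range_succ φ q)
  rw [hφ, add_left_inj] at hshift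
  rw [S, ← Ico_add_one_right_eq_Icc, sum_Ico_eq_sum_range, Nat.add_sub_cancel, ← hshift]
  simp only [φ, add_comm 1]

lemma S_one (b : ℤ) : S 1 b = 1 := by
  simpa [S] using e_intCast b

section PrimePower

variable {p : ℕ} {a : ℤ}

lemma prime_dvd_three_mul_mul_sq_iff (hp : p.Prime) (hp3 : p ≠ 3) (ha : ¬ (p : ℤ) ∣ a)
    (x : ℕ) :
    (p : ℤ) ∣ 3 * a * x ^ 2 ↔ p ∣ x := by
  have hpZ : Prime (p : ℤ) := Nat.prime_iff_prime_int.mp hp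
  have h3 : ¬ (p : ℤ) ∣ 3 := by
    exact_mod_cast fun h => hp3 ((Nat.prime_dvd_prime_iff_eq hp Nat.prime_three).mp h)
  rw [hpZ.dvd_mul, hpZ.dvd_mul, or_iff_right h3, or_iff_right ha,
    hpZ.dvd_pow_iff_dvd two_ne_zero, Int.natCast_dvd_natCast]

lemma S_prime_pow_add_two (hp : p.Prime) (hp3 : p ≠ 3) (ha : ¬ (p : ℤ) ∣ a) (j : ℕ) :
    S (p ^ (j + 2)) a =
      p * ∑ z ∈ range (p ^ j), e (a * ((p * z : ℕ) : ℝ) ^ 3 / (p ^ (j + 2) : ℕ)) := by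
  have hp0 := hp.pos
  have hexpand (y x : ℕ) : e (a * ((p ^ (j + 1) * y + x : ℕ) : ℝ) ^ 3 / (p ^ (j + 2) : ℕ))
      = e (a * (x : ℝ) ^ 3 / (p ^ (j + 2) : ℕ)) * e ((3 * a * x ^ 2 : ℤ) * y / p) := by
    have h : (a : ℝ) * ((p ^ (j + 1) * y + x : ℕ) : ℝ) ^ 3 / (p ^ (j + 2) : ℕ)
        = a * (x : ℝ) ^ 3 / (p ^ (j + 2) : ℕ) + (3 * a * x ^ 2 : ℤ) * y / p
          + ((3 * a * x * y ^ 2 * p ^ j + a * y ^ 3 * p ^ (2 * j + 1) : ℤ) : ℝ) := by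
      push_cast
      field_simp
      ring
    rw [h, e_add_intCast, e_add]
  have hsplit : range (p ^ (j + 2)) = range (p ^ (j + 1) * p) := by rw [← pow_succ]
  calc S (p ^ (j + 2)) a
      = ∑ x ∈ range (p ^ (j + 1)), e (a * (x : ℝ) ^ 3 / (p ^ (j + 2) : ℕ)) *
          ∑ y ∈ range p, e ((3 * a * x ^ 2 : ℤ) * y / p) := by
        rw [S_eq_sum_range, hsplit, sum_range_mul, sum_comm]
        simp only [hexpand, mul_sum]
    _ = ∑ x ∈ range (p * p ^ j),
          if p ∣ x then p * e (a * (x : ℝ) ^ 3 / (p ^ (j + 2) : ℕ)) else 0 := by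
        rw [← pow_succ']
        refine sum_congr rfl fun x _ => ?_
        simp only [sum_range_e_mul_div hp0, prime_dvd_three_mul_mul_sq_iff hp hp3 ha]
        split_ifs <;> ring
    _ = _ := by rw [sum_range_mul_ite_dvd _ hp0, mul_sum]

lemma S_prime_pow_add_three (hp : p.Prime) (hp3 : p ≠ 3) (ha : ¬ (p : ℤ) ∣ a) (i : ℕ) :
    S (p ^ (i + 3)) a = p ^ 2 * S (p ^ i) a := by
  have hp0 : (p : ℝ) ≠ 0 := by exact_mod_cast hp.ne_zero
  have hterm (z : ℕ) : e (a * ((p * z : ℕ) : ℝ) ^ 3 / (p ^ (i + 1 + 2) : ℕ))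
      = e (a * (z : ℝ) ^ 3 / (p ^ i : ℕ)) := by
    congr 1
    push_cast
    field_simp
    ring
  rw [show i + 3 = i + 1 + 2 by ring, S_prime_pow_add_two hp hp3 ha, pow_succ p i]
  simp only [hterm]
  rw [(periodic_e_mul_cube_div a (p ^ i)).sum_range_mul, ← S_eq_sum_range, nsmul_eq_mul]
  ring

lemma S_prime_pow_three_mul_add (hp : p.Prime) (hp3 : p ≠ 3) (ha : ¬ (p : ℤ) ∣ a)
    (u r : ℕ) :
    S (p ^ (3 * u + r)) a = p ^ (2 * u) * S (p ^ r) a := by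
  induction u with
  | zero => simp
  | succ u ih =>
    rw [show 3 * (u + 1) + r = 3 * u + r + 3 by ring, S_prime_pow_add_three hp hp3 ha, ih]
    ring

lemma S_prime_sq (hp : p.Prime) (hp3 : p ≠ 3) (ha : ¬ (p : ℤ) ∣ a) : S (p ^ 2) a = p := by
  simpa [e_zero] using S_prime_pow_add_two hp hp3 ha 0

lemma S_prime_pow_three (hp : p.Prime) (hp3 : p ≠ 3) (ha : ¬ (p : ℤ) ∣ a) :
    S (p ^ 3) a = p ^ 2 := by
  simpa [S_one] using S_prime_pow_add_three hp hp3 ha 0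

end PrimePower

section LocalDensity

variable {p : ℕ}

lemma coprime_prime_pow_succ_iff (hp : p.Prime) (k c : ℕ) :
    Nat.Coprime c (p ^ (k + 1)) ↔ ¬ p ∣ c :=
  (Nat.coprime_pow_right_iff k.succ_pos c p).trans
    (Nat.coprime_comm.trans hp.coprime_iff_not_dvd)

lemma filter_not_dvd_Icc_eq_filter_range {n : ℕ} (hn : p ∣ n) :
    (Icc 1 n).filter (fun c => ¬ p ∣ c) = (range n).filter (fun c => ¬ p ∣ c) := by
  ext c
  simp only [mem_filter, mem_Icc, mem_range]
  constructor
  · rintro ⟨⟨-, hcn⟩, hc⟩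
    exact ⟨lt_of_le_of_ne hcn fun h => hc (h ▸ hn), hc⟩
  · rintro ⟨hcn, hc⟩
    exact ⟨⟨Nat.pos_of_ne_zero fun h => hc (h ▸ dvd_zero p), hcn.le⟩, hc⟩

lemma filter_not_dvd_range_self (hp : 0 < p) :
    (range p).filter (fun c => ¬ p ∣ c) = Icc 1 (p - 1) := by
  ext c
  simp only [mem_filter, mem_range, mem_Icc]
  constructor
  · rintro ⟨hcp, hc⟩
    have : c ≠ 0 := fun h => hc (h ▸ dvd_zero p)
    omega
  · rintro ⟨hc1, hcp⟩
    exact ⟨by omega, fun h => by simp [Nat.eq_zero_of_dvd_of_lt h (by omega)] at hc1⟩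

lemma sum_coprime_prime_pow_of_periodic {M : Type*} [AddCommMonoid M] (hp : p.Prime) (k : ℕ)
    {g : ℕ → M} (hg : Function.Periodic g p) :
    ∑ c ∈ (Icc 1 (p ^ (k + 1))).filter (fun c => Nat.gcd c (p ^ (k + 1)) = 1), g c
      = p ^ k • ∑ x ∈ Icc 1 (p - 1), g x := by
  have hperiodic : Function.Periodic (fun c => if ¬ p ∣ c then g c else 0) p :=
    fun c => by simp only [Nat.dvd_add_self_right, hg c]
  rw [filter_congr fun c _ => coprime_prime_pow_succ_iff hp k c,
    filter_not_dvd_Icc_eq_filter_range (dvd_pow_self p k.succ_ne_zero), sum_filter, pow_succ',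
    hperiodic.sum_range_mul, ← sum_filter, filter_not_dvd_range_self hp.pos]

lemma T_prime_pow_succ (hp : p.Prime) (k : ℕ) {g : ℕ → ℝ} (hg : Function.Periodic g p)
    (hS : ∀ c : ℕ, ¬ p ∣ c → ‖S (p ^ (k + 1)) c‖ ^ 6 = g c) :
    T (p ^ (k + 1)) = (∑ x ∈ Icc 1 (p - 1), g x) / p ^ (6 * k + 7) := by
  have hp0 : (p : ℝ) ≠ 0 := by exact_mod_cast hp.ne_zero
  have hsum : ∑ c ∈ (Icc 1 (p ^ (k + 1))).filter (fun c => Nat.gcd c (p ^ (k + 1)) = 1),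
      ‖S (p ^ (k + 1)) c‖ ^ 6 = ∑ c ∈ (Icc 1 (p ^ (k + 1))).filter
        (fun c => Nat.gcd c (p ^ (k + 1)) = 1), g c :=
    sum_congr rfl fun c hc => hS c ((coprime_prime_pow_succ_iff hp k c).mp (mem_filter.mp hc).2)
  rw [T, hsum, sum_coprime_prime_pow_of_periodic hp k hg, nsmul_eq_mul]
  push_cast
  field_simp
  ring

lemma T_prime_pow_three_mul_add_one (hp : p.Prime) (hp3 : p ≠ 3) (u : ℕ) :
    T (p ^ (3 * u + 1)) = (∑ c ∈ Icc 1 (p - 1), ‖S p c‖ ^ 6) / p ^ (6 * u + 7) := by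
  have hg : Function.Periodic (fun c : ℕ => (p : ℝ) ^ (12 * u) * ‖S p c‖ ^ 6) p :=
    fun c => by simp only [Nat.cast_add, periodic_S p c]
  have hp0 : (p : ℝ) ≠ 0 := by exact_mod_cast hp.ne_zero
  rw [T_prime_pow_succ hp (3 * u) hg fun c hc => ?_, ← mul_sum]
  · field_simp
    ring
  · rw [S_prime_pow_three_mul_add hp hp3 (Int.natCast_dvd_natCast.not.mpr hc) u 1, pow_one,
      norm_mul, mul_pow, norm_pow, Complex.norm_natCast, ← pow_mul]
    ring_nf

lemma T_prime_pow_of_norm_S (hp : p.Prime) (k m : ℕ)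
    (hS : ∀ c : ℕ, ¬ p ∣ c → ‖S (p ^ (k + 1)) c‖ = p ^ m) :
    T (p ^ (k + 1)) = (p - 1) * p ^ (6 * m) / p ^ (6 * k + 7) := by
  rw [T_prime_pow_succ hp k (g := fun _ => (p : ℝ) ^ (6 * m)) (fun _ => rfl)
      fun c hc => by rw [hS c hc, ← pow_mul, mul_comm],
    sum_const, Nat.card_Icc, Nat.add_sub_cancel, nsmul_eq_mul, Nat.cast_pred hp.pos]

lemma T_prime_pow_three_mul_add_two (hp : p.Prime) (hp3 : p ≠ 3) (u : ℕ) :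
    T (p ^ (3 * u + 2)) = (p - 1) / p ^ (6 * u + 7) := by
  have hp0 : (p : ℝ) ≠ 0 := by exact_mod_cast hp.ne_zero
  rw [T_prime_pow_of_norm_S hp (3 * u + 1) (2 * u + 1) fun c hc => ?_]
  · field_simp
    ring
  · rw [show 3 * u + 1 + 1 = 3 * u + 2 from rfl,
      S_prime_pow_three_mul_add hp hp3 (Int.natCast_dvd_natCast.not.mpr hc) u 2,
      S_prime_sq hp hp3 (Int.natCast_dvd_natCast.not.mpr hc)]
    simp [pow_succ]

lemma T_prime_pow_three_mul_add_three (hp : p.Prime) (hp3 : p ≠ 3) (u : ℕ) :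
    T (p ^ (3 * u + 3)) = (p - 1) / p ^ (6 * u + 7) := by
  have hp0 : (p : ℝ) ≠ 0 := by exact_mod_cast hp.ne_zero
  rw [T_prime_pow_of_norm_S hp (3 * u + 2) (2 * u + 2) fun c hc => ?_]
  · field_simp
    ring
  · rw [show 3 * u + 2 + 1 = 3 * u + 3 from rfl,
      S_prime_pow_three_mul_add hp hp3 (Int.natCast_dvd_natCast.not.mpr hc) u 3,
      S_prime_pow_three hp hp3 (Int.natCast_dvd_natCast.not.mpr hc)]
    simp [pow_add]

lemma T_one : T 1 = 1 := by
  simp [T, S_one]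

end LocalDensity

noncomputable def localFactorCoeff (p : ℕ) (s : ℂ) : Fin 3 → ℂ :=
  ![(∑ c ∈ Icc 1 (p - 1), (‖S p c‖ ^ 6 : ℂ)) * (p : ℂ) ^ (-(s + 7)),
    ((p : ℂ) - 1) * (p : ℂ) ^ (-(2 * s + 7)), ((p : ℂ) - 1) * (p : ℂ) ^ (-(3 * s + 7))]

lemma div_natCast_pow_div_cpow {p : ℕ} (hp : p ≠ 0) (c : ℂ) (u j : ℕ) (s : ℂ) :
    c / (p : ℂ) ^ (6 * u + 7) / (p : ℂ) ^ (((3 * u + j + 1 : ℕ) : ℂ) * s)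
      = ((p : ℂ) ^ (-(3 * s + 6))) ^ u * (c * (p : ℂ) ^ (-((j + 1) * s + 7))) := by
  have hp' : (p : ℂ) ≠ 0 := by exact_mod_cast hp
  rw [← Complex.cpow_natCast, ← Complex.cpow_nat_mul, div_div, ← Complex.cpow_add _ _ hp',
    div_eq_mul_inv, ← Complex.cpow_neg, mul_left_comm, ← Complex.cpow_add _ _ hp']
  congr 2
  push_cast
  ring

lemma T_prime_pow_div_cpow {p : ℕ} (hp : p.Prime) (hp3 : p ≠ 3) (s : ℂ) (u : ℕ)
    (r : Fin 3) :
    (T (p ^ (3 * u + r + 1)) : ℂ) / (p : ℂ) ^ (((3 * u + r + 1 : ℕ) : ℂ) * s)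
      = ((p : ℂ) ^ (-(3 * s + 6))) ^ u * localFactorCoeff p s r := by
  let c : Fin 3 → ℝ := ![∑ c ∈ Icc 1 (p - 1), ‖S p c‖ ^ 6, p - 1, p - 1]
  have hT : T (p ^ (3 * u + r + 1)) = c r / p ^ (6 * u + 7) := by
    fin_cases r
    · exact T_prime_pow_three_mul_add_one hp hp3 u
    · exact T_prime_pow_three_mul_add_two hp hp3 u
    · exact T_prime_pow_three_mul_add_three hp hp3 u
  rw [hT, Complex.ofReal_div, Complex.ofReal_pow, Complex.ofReal_natCast,
    div_natCast_pow_div_cpow hp.ne_zero]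
  congr 1
  fin_cases r <;> norm_num [localFactorCoeff, c]

lemma norm_natCast_cpow_lt_one {n : ℕ} (hn : 1 < n) {w : ℂ} (hw : w.re < 0) :
    ‖(n : ℂ) ^ w‖ < 1 := by
  rw [Complex.norm_natCast_cpow_of_pos (by omega)]
  exact Real.rpow_lt_one_of_one_lt_of_neg (by exact_mod_cast hn) hw

theorem local_factor_p (p : ℕ) (hp : p.Prime) (hp3 : p ≠ 3) (s : ℂ)
    (hs : -2 < s.re) :
    Summable (fun k : ℕ => ‖(T (p ^ k) : ℂ) / (p : ℂ) ^ ((k : ℂ) * s)‖) ∧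
    (∑' k : ℕ, (T (p ^ k) : ℂ) / (p : ℂ) ^ ((k : ℂ) * s)) =
      (1 - (p : ℂ) ^ (-(3 * s + 6)))⁻¹ *
        (1 + (p : ℂ) ^ (-(s + 7)) * ∑ c ∈ Finset.Icc 1 (p - 1), (‖S p c‖ ^ 6 : ℂ)
          + ((p : ℂ) - 1) * (p : ℂ) ^ (-(2 * s + 7)) - (p : ℂ) ^ (-(3 * s + 7))) := by
  have hqp : (p : ℂ) ^ (-(3 * s + 6)) = p * (p : ℂ) ^ (-(3 * s + 7)) := by
    rw [show -(3 * s + 6) = 1 + -(3 * s + 7) by ring,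
      Complex.cpow_add _ _ (by exact_mod_cast hp.ne_zero), Complex.cpow_one]
  set q : ℂ := (p : ℂ) ^ (-(3 * s + 6))
  have hq : ‖q‖ < 1 := norm_natCast_cpow_lt_one hp.one_lt (by simp; linarith)
  have hterm := T_prime_pow_div_cpow hp hp3 s
  have hsum := hasSum_of_apply_mul_add_eq_pow_mul
    (f := fun k => (T (p ^ (k + 1)) : ℂ) / (p : ℂ) ^ (((k + 1 : ℕ) : ℂ) * s)) hq _ hterm
  have hnorm := hasSum_of_apply_mul_add_eq_pow_mul
    (f := fun k => ‖(T (p ^ (k + 1)) : ℂ) / (p : ℂ) ^ (((k + 1 : ℕ) : ℂ) * s)‖) (q := ‖q‖)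
    (by rwa [norm_norm]) _ fun u r => by rw [hterm, norm_mul, norm_pow]
  refine ⟨(summable_nat_add_iff
    (f := fun k : ℕ => ‖(T (p ^ k) : ℂ) / (p : ℂ) ^ ((k : ℂ) * s)‖) 1).mp hnorm.summable, ?_⟩
  rw [(hasSum_nat_add_iff (f := fun k : ℕ => (T (p ^ k) : ℂ) / (p : ℂ) ^ ((k : ℂ) * s)) 1
    |>.mp hsum).tsum_eq]
  have hq1 : 1 - q ≠ 0 := sub_ne_zero.mpr fun h => by simp [← h] at hq
  simp only [Fin.sum_univ_three, localFactorCoeff, Matrix.cons_val, sum_range_one, pow_zero, T_one,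
    Complex.ofReal_one, Nat.cast_zero, zero_mul, Complex.cpow_zero, div_one]
  linear_combination -(1 - q)⁻¹ * hqp - mul_inv_cancel₀ hq1
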